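/- arXiv:1403.6062 — 5 statements merged into one kernel-verified Lean document; each statement's English description precedes it below -/
import Mathlib

section
/- Let I ⊆ ℝ be an open interval and let T, X : I × ℝ → ℝ be smooth functions whose Jacobian determinant T_t X_x − T_x X_t is nowhere zero. Suppose that for every second-order linear ODE E on I (with arbitrary smooth coefficients a₁, a₀, b) there exists a second-order linear ODE Ẽ such that the point transformation (T, X) maps E to Ẽ. Then ∂T/∂x ≡ 0 and ∂²X/∂x² ≡ 0 on I × ℝ; that is, T = T(t) depends only on t and X(t,x) = X₁(t)x + X₀(t) for smooth functions X₁, X₀ with T'(t)X₁(t) ≠ 0 for all t ∈ I. -/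
/-!
Only the free equation `x'' = 0` is needed; its solutions through `(t₀, x₀)` are the lines of
every slope `p`. If `T_x ≠ 0` at `(t₀, x₀)`, along the line of slope `p = -T_t / T_x` the
derivative of `T(t, x(t))` vanishes at `t₀`, so differentiating `X(t, x(t)) = y(T(t, x(t)))` gives
`X_t + p X_x = 0` too, and the Jacobian vanishes. Once `T = T(t)`, differentiating the same
identity twice and eliminating `y''` with the target equation writes
`X_tt + 2p X_tx + p² X_xx` as an affine function of `y'(T(t₀)) = (X_t + p X_x) / T'(t₀)`, hence
of `p`; comparing the coefficients of `p²` gives `X_xx = 0`.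
-/

open Set

/-- The left-hand side `x^(r)(t) + ∑_{i<r} aᵢ(t) x^(i)(t)` of an `r`-th order linear ODE. -/
noncomputable def odeLHS (r : ℕ) (a : ℕ → ℝ → ℝ) (x : ℝ → ℝ) (t : ℝ) : ℝ :=
  iteratedDeriv r x t + ∑ i ∈ Finset.range r, a i t * iteratedDeriv i x t

/-- `x` is a solution on `I` of the linear ODE `x^(r) + ∑_{i<r} aᵢ x^(i) = b`:
it is smooth on `I` and satisfies the identity on `I`. -/
def IsSolODE (r : ℕ) (a : ℕ → ℝ → ℝ) (b : ℝ → ℝ) (I : Set ℝ) (x : ℝ → ℝ) : Prop :=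
  ContDiffOn ℝ (⊤ : ℕ∞) x I ∧ ∀ t ∈ I, odeLHS r a x t = b t

/-- `I ⊆ ℝ` is a (nonempty) open interval. -/
def IsOpenInterval (I : Set ℝ) : Prop := IsOpen I ∧ I.OrdConnected ∧ I.Nonempty

/-- The point transformation `(t, x) ↦ (T(t,x), X(t,x))` maps the `r`-th order linear ODE
with coefficients `a`, `b` on `I` to the one with coefficients `a'`, `b'` on `I'`:
for every solution `x` of the source equation and every `t₀ ∈ I` there is an open
subinterval `J ∋ t₀` of `I` on which `t ↦ T(t, x(t))` is strictly monotone and a solution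
`y` of the target equation with `X(t, x(t)) = y(T(t, x(t)))` on `J`. -/
def PTMapsODE (r : ℕ) (I : Set ℝ) (a : ℕ → ℝ → ℝ) (b : ℝ → ℝ)
    (I' : Set ℝ) (a' : ℕ → ℝ → ℝ) (b' : ℝ → ℝ) (T X : ℝ → ℝ → ℝ) : Prop :=
  ∀ x : ℝ → ℝ, IsSolODE r a b I x → ∀ t₀ ∈ I,
    ∃ J : Set ℝ, IsOpen J ∧ J.OrdConnected ∧ t₀ ∈ J ∧ J ⊆ I ∧
      (StrictMonoOn (fun t => T t (x t)) J ∨ StrictAntiOn (fun t => T t (x t)) J) ∧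
      ∃ y : ℝ → ℝ, IsSolODE r a' b' I' y ∧
        ∀ t ∈ J, T t (x t) ∈ I' ∧ X t (x t) = y (T t (x t))

open Filter Function Topology

section Calculus

variable {E G : Type*} [NormedAddCommGroup E] [NormedSpace ℝ E]
  [NormedAddCommGroup G] [NormedSpace ℝ G]

theorem ContinuousLinearMap.apply_prod (L : ℝ × ℝ →L[ℝ] G) (a b : ℝ) :
    L (a, b) = a • L (1, 0) + b • L (0, 1) := by
  rw [← map_smul, ← map_smul, ← map_add]
  simp

theorem HasFDerivAt.hasDerivAt_comp_graph {f : ℝ → ℝ → G} {L : ℝ × ℝ →L[ℝ] G} {t x : ℝ}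
    {c : ℝ → ℝ} {c' : ℝ} (hf : HasFDerivAt (uncurry f) L (t, x)) (hc : HasDerivAt c c' t)
    (hct : c t = x) : HasDerivAt (fun s => f s (c s)) (L (1, c')) t :=
  hf.comp_hasDerivAt_of_eq t ((hasDerivAt_id t).prodMk hc) (by rw [hct]; rfl)

theorem HasFDerivAt.hasDerivAt_uncurry_right {f : ℝ → ℝ → G} {L : ℝ × ℝ →L[ℝ] G} {t x : ℝ}
    (hf : HasFDerivAt (uncurry f) L (t, x)) : HasDerivAt (fun y => f t y) (L (0, 1)) x :=
  hf.comp_hasDerivAt x ((hasDerivAt_const x t).prodMk (hasDerivAt_id x))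

theorem ContDiffAt.comp_graph {n : WithTop ℕ∞} {f : ℝ → ℝ → G} {c : ℝ → ℝ} {t x : ℝ}
    (hf : ContDiffAt ℝ n (uncurry f) (t, x)) (hc : ContDiffAt ℝ n c t) (hct : c t = x) :
    ContDiffAt ℝ n (fun s => f s (c s)) t := by
  subst hct
  exact hf.comp₂ contDiffAt_id hc

theorem ContDiffAt.hasDerivAt_deriv_comp {F : E → G} {γ : ℝ → E} {v z : E} {t : ℝ}
    (hF : ContDiffAt ℝ 2 F z) (hγ : ∀ s, HasDerivAt γ v s) (hγt : γ t = z) :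
    HasDerivAt (deriv fun s => F (γ s)) (fderiv ℝ (fderiv ℝ F) z v v) t := by
  subst hγt
  have hdiff : ∀ᶠ s in 𝓝 t, DifferentiableAt ℝ F (γ s) :=
    (hγ t).continuousAt.eventually
      ((hF.eventually (by simp)).mono fun _ h => h.differentiableAt (by simp))
  have hderiv : (deriv fun s => F (γ s)) =ᶠ[𝓝 t] fun s => fderiv ℝ F (γ s) v :=
    hdiff.mono fun s hs => (hs.hasFDerivAt.comp_hasDerivAt s (hγ s)).deriv
  have hF' : DifferentiableAt ℝ (fderiv ℝ F) (γ t) :=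
    (hF.fderiv_right (m := 1) le_rfl).differentiableAt one_ne_zero
  simpa using ((hF'.hasFDerivAt.comp_hasDerivAt t (hγ t)).clm_apply
    (hasDerivAt_const t v)).congr_of_eventuallyEq hderiv

variable {I : Set ℝ}

theorem contDiffAt_uncurry_of_contDiffOn {n : WithTop ℕ∞} {f : ℝ → ℝ → G} (hI : IsOpen I)
    (hf : ContDiffOn ℝ n (uncurry f) (I ×ˢ univ)) {t : ℝ} (ht : t ∈ I) (x : ℝ) :
    ContDiffAt ℝ n (uncurry f) (t, x) :=
  hf.contDiffAt ((hI.prod isOpen_univ).mem_nhds ⟨ht, trivial⟩)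

theorem contDiff_of_contDiffOn_uncurry {n : WithTop ℕ∞} {f : ℝ → ℝ → G}
    (hf : ContDiffOn ℝ n (uncurry f) (I ×ˢ univ)) {t : ℝ} (ht : t ∈ I) :
    ContDiff ℝ n (fun y => f t y) :=
  contDiffOn_univ.mp (hf.comp (contDiffOn_const.prodMk contDiffOn_id) fun _ _ => ⟨ht, trivial⟩)

theorem contDiffOn_deriv_of_contDiffOn_uncurry {m n : WithTop ℕ∞} {f : ℝ → ℝ → G}
    (hI : IsOpen I) (hf : ContDiffOn ℝ n (uncurry f) (I ×ˢ univ)) (hmn : m + 1 ≤ n) (x : ℝ) :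
    ContDiffOn ℝ m (fun t => deriv (fun y => f t y) x) I := by
  have hf' := hf.fderiv_of_isOpen (hI.prod isOpen_univ) hmn
  have hpartial : ContDiffOn ℝ m (fun t => fderiv ℝ (uncurry f) (t, x) (0, 1)) I :=
    (hf'.comp (contDiffOn_id.prodMk contDiffOn_const) fun _ ht => ⟨ht, trivial⟩).clm_apply
      contDiffOn_const
  refine hpartial.congr fun t ht => ?_
  have hn : n ≠ 0 := (lt_of_lt_of_le (by simp) hmn).ne'
  exact ((contDiffAt_uncurry_of_contDiffOn hI hf ht x).differentiableAt
    hn).hasFDerivAt.hasDerivAt_uncurry_right.deriv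

end Calculus

theorem deriv_deriv_of_eventuallyEq_comp {g y τ : ℝ → ℝ} {t : ℝ}
    (hy : ContDiffAt ℝ 2 y (τ t)) (hτ : ContDiffAt ℝ 2 τ t) (hg : g =ᶠ[𝓝 t] y ∘ τ) :
    deriv g t = deriv y (τ t) * deriv τ t ∧
      deriv (deriv g) t =
        deriv (deriv y) (τ t) * deriv τ t ^ 2 + deriv y (τ t) * deriv (deriv τ) t := by
  have hy_near : ∀ᶠ s in 𝓝 t, DifferentiableAt ℝ y (τ s) :=
    hτ.continuousAt.eventually
      ((hy.eventually (by simp)).mono fun _ h => h.differentiableAt (by simp))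
  have hτ_near : ∀ᶠ s in 𝓝 t, DifferentiableAt ℝ τ s :=
    (hτ.eventually (by simp)).mono fun _ h => h.differentiableAt (by simp)
  have hdg : deriv g =ᶠ[𝓝 t] fun s => deriv y (τ s) * deriv τ s := by
    filter_upwards [hg.deriv, hy_near, hτ_near] with s hs hys hτs
    rw [hs, deriv_comp s hys hτs]
  have hy' : DifferentiableAt ℝ (deriv y) (τ t) :=
    (hy.derivWithin (m := 1) le_rfl).differentiableAt one_ne_zero
  have hτ' : DifferentiableAt ℝ (deriv τ) t :=
    (hτ.derivWithin (m := 1) le_rfl).differentiableAt one_ne_zero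
  have hprod : HasDerivAt (fun s => deriv y (τ s) * deriv τ s)
      (deriv (deriv y) (τ t) * deriv τ t * deriv τ t + deriv y (τ t) * deriv (deriv τ) t) t :=
    (hy'.hasDerivAt.comp t hτ_near.self_of_nhds.hasDerivAt).mul hτ'.hasDerivAt
  refine ⟨hdg.eq_of_nhds, ?_⟩
  rw [hdg.deriv_eq, hprod.deriv]
  ring

theorem eq_deriv_zero_mul_add_of_deriv_deriv_eq_zero {f : ℝ → ℝ} (hf : ContDiff ℝ 2 f)
    (h : ∀ x, deriv (deriv f) x = 0) (x : ℝ) : f x = deriv f 0 * x + f 0 := by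
  have hf' : ∀ x, HasDerivAt f (deriv f 0) x := fun x => by
    rw [← is_const_of_deriv_eq_zero hf.differentiable_deriv_two h x 0]
    exact (hf.differentiable two_ne_zero x).hasDerivAt
  have hlin : ∀ x, HasDerivAt (fun x => f x - deriv f 0 * x) 0 x := fun x => by
    simpa using (hf' x).fun_sub ((hasDerivAt_id x).const_mul (deriv f 0))
  have := is_const_of_deriv_eq_zero (fun x => (hlin x).differentiableAt)
    (fun x => (hlin x).deriv) x 0
  simp only [mul_zero, sub_zero] at this
  linarith

theorem eq_zero_of_forall_quadratic_eq_affine {A B C D E : ℝ}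
    (h : ∀ p : ℝ, A + B * p + C * p ^ 2 = D + E * p) : C = 0 := by
  linear_combination (h 1 + h (-1)) / 2 - h 0

theorem odeLHS_two (a : ℕ → ℝ → ℝ) (x : ℝ → ℝ) (t : ℝ) :
    odeLHS 2 a x t = deriv (deriv x) t + a 1 t * deriv x t + a 0 t * x t := by
  simp only [odeLHS, Finset.sum_range_succ, Finset.sum_range_zero, iteratedDeriv_succ,
    iteratedDeriv_zero]
  ring

theorem hasDerivAt_line (c p t₀ s : ℝ) : HasDerivAt (fun s => c + p * (s - t₀)) p s := by
  simpa using (((hasDerivAt_id s).sub_const t₀).const_mul p).const_add c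

theorem isSolODE_two_zero_affine (I : Set ℝ) (c p t₀ : ℝ) :
    IsSolODE 2 (fun _ _ => 0) (fun _ => 0) I (fun s => c + p * (s - t₀)) := by
  refine ⟨ContDiff.contDiffOn (by fun_prop), fun t _ => ?_⟩
  simp [odeLHS_two]

theorem PTMapsODE.exists_eventuallyEq {r : ℕ} {I I' : Set ℝ} {a a' : ℕ → ℝ → ℝ}
    {b b' : ℝ → ℝ} {T X : ℝ → ℝ → ℝ} (h : PTMapsODE r I a b I' a' b' T X) {x : ℝ → ℝ}
    (hx : IsSolODE r a b I x) {t₀ : ℝ} (ht₀ : t₀ ∈ I) :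
    ∃ y, IsSolODE r a' b' I' y ∧
      ∀ᶠ t in 𝓝 t₀, T t (x t) ∈ I' ∧ X t (x t) = y (T t (x t)) := by
  obtain ⟨J, hJ, -, ht₀J, -, -, y, hy, hxy⟩ := h x hx t₀ ht₀
  exact ⟨y, hy, eventually_of_mem (hJ.mem_nhds ht₀J) hxy⟩

-- `w = y'(T(t₀, x(t₀)))` for the target solution `y` with `X(t, x(t)) = y(T(t, x(t)))`;
-- `y''` has been eliminated with the target equation.
theorem PTMapsODE.exists_deriv_relations {I I' : Set ℝ} {a a' : ℕ → ℝ → ℝ}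
    {b b' : ℝ → ℝ} {T X : ℝ → ℝ → ℝ} (h : PTMapsODE 2 I a b I' a' b' T X) (hI' : IsOpen I')
    {x : ℝ → ℝ} (hx : IsSolODE 2 a b I x) {t₀ : ℝ} (ht₀ : t₀ ∈ I)
    (hτ : ContDiffAt ℝ 2 (fun s => T s (x s)) t₀) :
    ∃ w, deriv (fun s => X s (x s)) t₀ = w * deriv (fun s => T s (x s)) t₀ ∧
      deriv (deriv fun s => X s (x s)) t₀ =
        (b' (T t₀ (x t₀)) - a' 1 (T t₀ (x t₀)) * w - a' 0 (T t₀ (x t₀)) * X t₀ (x t₀)) *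
          deriv (fun s => T s (x s)) t₀ ^ 2 + w * deriv (deriv fun s => T s (x s)) t₀ := by
  obtain ⟨y, hy, hxy⟩ := h.exists_eventuallyEq hx ht₀
  obtain ⟨hτI', hXy⟩ := hxy.self_of_nhds
  have hy2 : ContDiffAt ℝ 2 y (T t₀ (x t₀)) :=
    (hy.1.contDiffAt (hI'.mem_nhds hτI')).of_le ENat.LEInfty.out
  obtain ⟨hd1, hd2⟩ := deriv_deriv_of_eventuallyEq_comp (τ := fun s => T s (x s)) hy2 hτ
    (hxy.mono fun _ h => h.2)
  have hode := hy.2 _ hτI'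
  rw [odeLHS_two, ← hXy] at hode
  refine ⟨deriv y (T t₀ (x t₀)), hd1, ?_⟩
  rw [hd2]
  linear_combination deriv (fun s => T s (x s)) t₀ ^ 2 * hode

section PointTransformation

variable {I I' : Set ℝ} {T X : ℝ → ℝ → ℝ} {a' : ℕ → ℝ → ℝ} {b' : ℝ → ℝ}

theorem PTMapsODE.deriv_snd_eq_zero (hI : IsOpen I) (hI' : IsOpen I')
    (hT : ContDiffOn ℝ 2 (uncurry T) (I ×ˢ univ)) (hX : ContDiffOn ℝ 2 (uncurry X) (I ×ˢ univ))
    (hmap : PTMapsODE 2 I (fun _ _ => 0) (fun _ => 0) I' a' b' T X) {t₀ x₀ : ℝ} (ht₀ : t₀ ∈ I)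
    (hJac : deriv (fun s => T s x₀) t₀ * deriv (fun y => X t₀ y) x₀
        - deriv (fun y => T t₀ y) x₀ * deriv (fun s => X s x₀) t₀ ≠ 0) :
    deriv (fun y => T t₀ y) x₀ = 0 := by
  have hT₀ := contDiffAt_uncurry_of_contDiffOn hI hT ht₀ x₀
  have hTd := (hT₀.differentiableAt two_ne_zero).hasFDerivAt
  have hXd := ((contDiffAt_uncurry_of_contDiffOn hI hX ht₀ x₀).differentiableAt
    two_ne_zero).hasFDerivAt
  set LT := fderiv ℝ (uncurry T) (t₀, x₀)
  set LX := fderiv ℝ (uncurry X) (t₀, x₀)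
  rw [(hTd.hasDerivAt_comp_graph (hasDerivAt_const t₀ x₀) rfl).deriv,
    (hXd.hasDerivAt_comp_graph (hasDerivAt_const t₀ x₀) rfl).deriv,
    hTd.hasDerivAt_uncurry_right.deriv, hXd.hasDerivAt_uncurry_right.deriv] at hJac
  rw [hTd.hasDerivAt_uncurry_right.deriv]
  by_contra hTx
  -- along the line of slope `p` the transformed time `T` is stationary at `t₀`
  set p := -LT (1, 0) / LT (0, 1)
  have hp : LT (1, 0) + p * LT (0, 1) = 0 := by
    simp only [p]
    field_simp
    ring
  have hline := hasDerivAt_line x₀ p t₀ t₀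
  obtain ⟨w, hw, -⟩ := hmap.exists_deriv_relations hI' (isSolODE_two_zero_affine I x₀ p t₀) ht₀
    (hT₀.comp_graph (by fun_prop) (by simp))
  rw [(hTd.hasDerivAt_comp_graph hline (by simp)).deriv,
    (hXd.hasDerivAt_comp_graph hline (by simp)).deriv, LT.apply_prod, LX.apply_prod] at hw
  simp only [smul_eq_mul] at hw
  exact hJac (by linear_combination LX (0, 1) * hp - LT (0, 1) * hw - LT (0, 1) * w * hp)

theorem PTMapsODE.deriv_deriv_snd_eq_zero (hI : IsOpen I) (hI' : IsOpen I')
    (hT : ContDiffOn ℝ 2 (uncurry T) (I ×ˢ univ)) (hX : ContDiffOn ℝ 2 (uncurry X) (I ×ˢ univ))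
    (hmap : PTMapsODE 2 I (fun _ _ => 0) (fun _ => 0) I' a' b' T X)
    (hTx : ∀ t ∈ I, ∀ x, deriv (fun y => T t y) x = 0) {t₀ x₀ : ℝ} (ht₀ : t₀ ∈ I)
    (hTt : deriv (fun s => T s x₀) t₀ ≠ 0) :
    deriv (deriv fun y => X t₀ y) x₀ = 0 := by
  have hX₀ := contDiffAt_uncurry_of_contDiffOn hI hX ht₀ x₀
  have hXd := (hX₀.differentiableAt two_ne_zero).hasFDerivAt
  set τ := fun s => T s x₀
  set L := fderiv ℝ (uncurry X) (t₀, x₀)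
  set D := fderiv ℝ (fderiv ℝ (uncurry X)) (t₀, x₀)
  have hτ : ContDiffAt ℝ 2 τ t₀ :=
    (contDiffAt_uncurry_of_contDiffOn hI hT ht₀ x₀).comp_graph contDiffAt_const rfl
  have hτ_line : ∀ p : ℝ, (fun s => T s (x₀ + p * (s - t₀))) =ᶠ[𝓝 t₀] τ := fun p =>
    eventually_of_mem (hI.mem_nhds ht₀) fun s hs =>
      is_const_of_deriv_eq_zero ((contDiff_of_contDiffOn_uncurry hT hs).differentiable
        two_ne_zero) (hTx s hs) _ _
  -- the second derivative of `X` along the line of slope `p` is quadratic in `p`, while the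
  -- target equation makes it affine in `y'(τ(t₀))`, hence in `p`
  have key : ∀ p : ℝ,
      deriv τ t₀ * D (1, 0) (1, 0) + deriv τ t₀ * (D (1, 0) (0, 1) + D (0, 1) (1, 0)) * p
          + deriv τ t₀ * D (0, 1) (0, 1) * p ^ 2 =
        (deriv τ t₀ ^ 3 * (b' (τ t₀) - a' 0 (τ t₀) * X t₀ x₀)
          + (deriv (deriv τ) t₀ - a' 1 (τ t₀) * deriv τ t₀ ^ 2) * L (1, 0))
          + (deriv (deriv τ) t₀ - a' 1 (τ t₀) * deriv τ t₀ ^ 2) * L (0, 1) * p := by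
    intro p
    have hline := hasDerivAt_line x₀ p t₀
    obtain ⟨w, h1, h2⟩ := hmap.exists_deriv_relations hI' (isSolODE_two_zero_affine I x₀ p t₀)
      ht₀ (hτ.congr_of_eventuallyEq (hτ_line p))
    have hd1 : deriv (fun s => X s (x₀ + p * (s - t₀))) t₀ = L (1, p) :=
      (hXd.hasDerivAt_comp_graph (hline t₀) (by simp)).deriv
    have hd2 : deriv (deriv fun s => X s (x₀ + p * (s - t₀))) t₀ = D (1, p) (1, p) :=
      (hX₀.hasDerivAt_deriv_comp (γ := fun s => (s, x₀ + p * (s - t₀)))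
        (fun s => (hasDerivAt_id s).prodMk (hline s)) (by simp)).deriv
    rw [(hτ_line p).deriv_eq, hd1] at h1
    rw [(hτ_line p).deriv.deriv_eq, (hτ_line p).deriv_eq, hd2] at h2
    simp only [sub_self, mul_zero, add_zero] at h2
    rw [L.apply_prod] at h1
    rw [D.apply_prod, add_apply, smul_apply,
      smul_apply, (D (1, 0)).apply_prod, (D (0, 1)).apply_prod] at h2
    simp only [smul_eq_mul] at h1 h2
    linear_combination deriv τ t₀ * h2 - (deriv (deriv τ) t₀ - a' 1 (τ t₀) * deriv τ t₀ ^ 2) * h1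
  have hC : HasDerivAt (deriv fun y => X t₀ y) (D (0, 1) (0, 1)) x₀ :=
    hX₀.hasDerivAt_deriv_comp (γ := fun y => (t₀, y))
      (fun y => (hasDerivAt_const y t₀).prodMk (hasDerivAt_id y)) rfl
  rw [hC.deriv]
  exact (mul_eq_zero.mp (eq_zero_of_forall_quadratic_eq_affine key)).resolve_left hTt

end PointTransformation

/-- If a point transformation `(T, X)`, smooth on `I × ℝ` with nowhere
vanishing Jacobian, maps every second-order linear ODE on `I` to some second-order
linear ODE, then `T_x ≡ 0` and `X_xx ≡ 0` on `I × ℝ`, i.e. `T = T(t)` and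
`X(t,x) = X₁(t)x + X₀(t)` with `T' X₁ ≠ 0` on `I`. -/
theorem stmt0 (I : Set ℝ) (hI : IsOpenInterval I) (T X : ℝ → ℝ → ℝ)
    (hT : ContDiffOn ℝ (⊤ : ℕ∞) (fun p : ℝ × ℝ => T p.1 p.2) (I ×ˢ univ))
    (hX : ContDiffOn ℝ (⊤ : ℕ∞) (fun p : ℝ × ℝ => X p.1 p.2) (I ×ˢ univ))
    (hJac : ∀ t ∈ I, ∀ x : ℝ,
      deriv (fun s => T s x) t * deriv (fun y => X t y) x
        - deriv (fun y => T t y) x * deriv (fun s => X s x) t ≠ 0)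
    (hmaps : ∀ (a : ℕ → ℝ → ℝ) (b : ℝ → ℝ),
      (∀ i, ContDiffOn ℝ (⊤ : ℕ∞) (a i) I) → ContDiffOn ℝ (⊤ : ℕ∞) b I →
      ∃ (I' : Set ℝ) (a' : ℕ → ℝ → ℝ) (b' : ℝ → ℝ), IsOpenInterval I' ∧
        (∀ i, ContDiffOn ℝ (⊤ : ℕ∞) (a' i) I') ∧ ContDiffOn ℝ (⊤ : ℕ∞) b' I' ∧
        PTMapsODE 2 I a b I' a' b' T X) :
    (∀ t ∈ I, ∀ x : ℝ, deriv (fun y => T t y) x = 0) ∧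
    (∀ t ∈ I, ∀ x : ℝ, deriv (deriv (fun y => X t y)) x = 0) ∧
    ∃ X₁ X₀ : ℝ → ℝ, ContDiffOn ℝ (⊤ : ℕ∞) X₁ I ∧ ContDiffOn ℝ (⊤ : ℕ∞) X₀ I ∧
      (∀ t ∈ I, ∀ x : ℝ, X t x = X₁ t * x + X₀ t) ∧
      (∀ t ∈ I, deriv (fun s => T s 0) t * X₁ t ≠ 0) := by
  obtain ⟨I', a', b', hI', -, -, hmap⟩ :=
    hmaps (fun _ _ => 0) (fun _ => 0) (fun _ => contDiffOn_const) contDiffOn_const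
  have hT₂ : ContDiffOn ℝ 2 (uncurry T) (I ×ˢ univ) := hT.of_le ENat.LEInfty.out
  have hX₂ : ContDiffOn ℝ 2 (uncurry X) (I ×ˢ univ) := hX.of_le ENat.LEInfty.out
  have hTx : ∀ t ∈ I, ∀ x : ℝ, deriv (fun y => T t y) x = 0 := fun t ht x =>
    hmap.deriv_snd_eq_zero hI.1 hI'.1 hT₂ hX₂ ht (hJac t ht x)
  have hTt_mul : ∀ t ∈ I, ∀ x : ℝ, deriv (fun s => T s x) t * deriv (fun y => X t y) x ≠ 0 :=
    fun t ht x => by simpa [hTx t ht x] using hJac t ht x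
  have hXxx : ∀ t ∈ I, ∀ x : ℝ, deriv (deriv (fun y => X t y)) x = 0 := fun t ht x =>
    hmap.deriv_deriv_snd_eq_zero hI.1 hI'.1 hT₂ hX₂ hTx ht (left_ne_zero_of_mul (hTt_mul t ht x))
  refine ⟨hTx, hXxx, fun t => deriv (fun y => X t y) 0, fun t => X t 0,
    contDiffOn_deriv_of_contDiffOn_uncurry hI.1 hX (by simp) 0,
    hX.comp (contDiffOn_id.prodMk contDiffOn_const) fun _ ht => ⟨ht, trivial⟩,
    fun t ht x => ?_, fun t ht => hTt_mul t ht 0⟩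
  exact eq_deriv_zero_mul_add_of_deriv_deriv_eq_zero
    (contDiff_of_contDiffOn_uncurry hX₂ ht) (hXxx t ht) x
end

section
/- Let r ≥ 2, let I ⊆ ℝ be an open interval, and let T, X₁, X₀ : I → ℝ be smooth with T'(t)X₁(t) ≠ 0 for all t ∈ I (so T is a diffeomorphism of I onto the open interval T(I)). Then for every r-th order linear ODE E on I with smooth coefficients a_{r−1}, …, a₀, b there exist smooth functions ã_{r−1}, …, ã₀, b̃ on T(I) such that the fiber-preserving transformation t̃ = T(t), x̃ = X₁(t)x + X₀(t) maps E to the r-th order linear ODE with coefficients ã_{r−1}, …, ã₀, b̃; i.e., for every solution x of E the function y(s) = X₁(T⁻¹(s))·x(T⁻¹(s)) + X₀(T⁻¹(s)) satisfies y^{(r)} + ã_{r−1}y^{(r−1)} + ⋯ + ã₀y = b̃ on T(I). -/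
open Set

/-!
Let `S` be the inverse of `T`, let `y := (X₁ x + X₀) ∘ S` and `wⱼ := y⁽ʲ⁾ ∘ T`, so that
`wⱼ' = T' wⱼ₊₁` by the chain rule. Since `x = (w₀ - X₀) / X₁`, differentiating `k` times shows
that `x⁽ᵏ⁾ - (T'ᵏ / X₁) wₖ` is an affine combination of `w₀, …, wₖ₋₁` whose smooth coefficients
depend only on `T, X₁, X₀`. Substituted into the equation for `x`, this leaves `w_r` with the
nonvanishing coefficient `T'ʳ / X₁`; dividing by it and composing with `S` gives the
transformed equation.
-/

open scoped ContDiff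

theorem injOn_of_deriv_ne_zero {f : ℝ → ℝ} {s : Set ℝ} (hs : Convex ℝ s)
    (hf' : ∀ x ∈ s, deriv f x ≠ 0) : InjOn f s := by
  have hdiff : ∀ x ∈ s, DifferentiableAt ℝ f x := fun x hx =>
    differentiableAt_of_deriv_ne_zero (hf' x hx)
  have hcont : ContinuousOn f s := fun x hx => (hdiff x hx).continuousAt.continuousWithinAt
  rcases hasDerivWithinAt_forall_lt_or_forall_gt_of_forall_ne hs
    (fun x hx => (hdiff x hx).hasDerivAt.hasDerivWithinAt) hf' with hneg | hpos
  · exact (strictAntiOn_of_deriv_neg hs hcont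
      fun x hx => hneg x (interior_subset hx)).injOn
  · exact (strictMonoOn_of_deriv_pos hs hcont
      fun x hx => hpos x (interior_subset hx)).injOn

theorem isOpen_image_of_hasStrictDerivAt {𝕜 : Type*} [NontriviallyNormedField 𝕜]
    [CompleteSpace 𝕜] {f f' : 𝕜 → 𝕜} {s : Set 𝕜} (hs : IsOpen s)
    (hf : ∀ x ∈ s, HasStrictDerivAt f (f' x) x) (hf' : ∀ x ∈ s, f' x ≠ 0) :
    IsOpen (f '' s) := by
  rw [isOpen_iff_mem_nhds]
  rintro _ ⟨x, hx, rfl⟩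
  rw [← (hf x hx).map_nhds_eq (hf' x hx)]
  exact Filter.image_mem_map (hs.mem_nhds hx)

theorem contDiffOn_invFunOn {𝕂 : Type*} [RCLike 𝕂] {f : 𝕂 → 𝕂} {s : Set 𝕂} {n : WithTop ℕ∞}
    (hn : n ≠ 0) (hs : IsOpen s) (hinj : InjOn f s) (hf : ContDiffOn 𝕂 n f s)
    (hf' : ∀ x ∈ s, deriv f x ≠ 0) : ContDiffOn 𝕂 n (Function.invFunOn f s) (f '' s) := by
  have hstrict : ∀ x ∈ s, HasStrictDerivAt f (deriv f x) x := fun x hx =>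
    (hf.contDiffAt (hs.mem_nhds hx)).hasStrictDerivAt hn
  have hopen : IsOpenMap (s.domRestrict f) := by
    intro u hu
    rw [← image_image_val_eq_domRestrict_image]
    exact isOpen_image_of_hasStrictDerivAt (hs.isOpenMap_subtype_val u hu)
      (fun x hx => hstrict x (image_val_subset hx)) (fun x hx => hf' x (image_val_subset hx))
  let e := OpenPartialHomeomorph.ofContinuousOpenRestrict (hinj.toPartialEquiv f s)
    hf.continuousOn hopen hs
  intro y hy
  obtain ⟨x, hx, rfl⟩ := hy
  have hsymm : e.symm (f x) = x := hinj.leftInvOn_invFunOn hx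
  refine (e.contDiffAt_symm_deriv (hf' x hx) (mem_image_of_mem f hx) ?_ ?_).contDiffWithinAt
  · rw [hsymm]; exact (hstrict x hx).hasDerivAt
  · rw [hsymm]; exact hf.contDiffAt (hs.mem_nhds hx)

theorem exists_contDiffOn_leftInvOn {T : ℝ → ℝ} {I : Set ℝ} (hIo : IsOpen I)
    (hIc : I.OrdConnected) (hT : ContDiffOn ℝ ∞ T I) (hT' : ∀ t ∈ I, deriv T t ≠ 0) :
    IsOpen (T '' I) ∧ ∃ S : ℝ → ℝ, ContDiffOn ℝ ∞ S (T '' I) ∧ MapsTo S (T '' I) I ∧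
      LeftInvOn S T I := by
  have hinj : InjOn T I := injOn_of_deriv_ne_zero hIc.convex hT'
  refine ⟨isOpen_image_of_hasStrictDerivAt hIo
    (fun t ht => (hT.contDiffAt (hIo.mem_nhds ht)).hasStrictDerivAt (by simp)) hT',
    Function.invFunOn T I, contDiffOn_invFunOn (by simp) hIo hinj hT hT', ?_,
    hinj.leftInvOn_invFunOn⟩
  rintro _ ⟨t, ht, rfl⟩
  rwa [hinj.leftInvOn_invFunOn ht]

theorem ContDiffOn.iteratedDeriv_of_isOpen {f : ℝ → ℝ} {s : Set ℝ} (hf : ContDiffOn ℝ ∞ f s)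
    (hs : IsOpen s) (k : ℕ) : ContDiffOn ℝ ∞ (iteratedDeriv k f) s := by
  induction k with
  | zero => simpa using hf
  | succ k ih => rw [iteratedDeriv_succ]; exact ih.deriv_of_isOpen hs le_rfl

theorem ContDiffOn.differentiableAt_of_isOpen {f : ℝ → ℝ} {s : Set ℝ} {x : ℝ}
    (hf : ContDiffOn ℝ ∞ f s) (hs : IsOpen s) (hx : x ∈ s) : DifferentiableAt ℝ f x :=
  (hf.contDiffAt (hs.mem_nhds hx)).differentiableAt (by simp)

theorem hasDerivAt_iteratedDeriv_comp {y T : ℝ → ℝ} {J : Set ℝ} {T' t : ℝ} (hJ : IsOpen J)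
    (hy : ContDiffOn ℝ ∞ y J) (hTt : T t ∈ J) (hT : HasDerivAt T T' t) (j : ℕ) :
    HasDerivAt (fun t => iteratedDeriv j y (T t)) (T' * iteratedDeriv (j + 1) y (T t)) t := by
  rw [iteratedDeriv_succ, mul_comm]
  exact ((hy.iteratedDeriv_of_isOpen hJ j).differentiableAt_of_isOpen hJ hTt).hasDerivAt.comp t hT

/-- The coefficients do not depend on the parameter `a`: it will range over the solutions of the
equation, and the transformed equation has to be fixed before the solution is. -/
def IsUniformAffineComb {α : Type*} (I : Set ℝ) (w : α → ℕ → ℝ → ℝ) (n : ℕ)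
    (f : α → ℝ → ℝ) : Prop :=
  ∃ (p : ℕ → ℝ → ℝ) (q : ℝ → ℝ), (∀ j, ContDiffOn ℝ ∞ (p j) I) ∧ ContDiffOn ℝ ∞ q I ∧
    ∀ a, ∀ t ∈ I, f a t = ∑ j ∈ Finset.range n, p j t * w a j t + q t

namespace IsUniformAffineComb

variable {α : Type*} {I : Set ℝ} {w : α → ℕ → ℝ → ℝ} {n : ℕ} {f g : α → ℝ → ℝ}

theorem congr (hf : IsUniformAffineComb I w n f) (hfg : ∀ a, ∀ t ∈ I, f a t = g a t) :
    IsUniformAffineComb I w n g := by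
  obtain ⟨p, q, hp, hq, hf⟩ := hf
  exact ⟨p, q, hp, hq, fun a t ht => (hfg a t ht).symm.trans (hf a t ht)⟩

theorem of_contDiffOn {q : ℝ → ℝ} (hq : ContDiffOn ℝ ∞ q I) :
    IsUniformAffineComb I w n (fun _ => q) :=
  ⟨0, q, fun _ => contDiffOn_const, hq, fun _ _ _ => by simp⟩

theorem term {j : ℕ} (hj : j < n) {c : ℝ → ℝ} (hc : ContDiffOn ℝ ∞ c I) :
    IsUniformAffineComb I w n (fun a t => c t * w a j t) := by
  refine ⟨fun i t => if i = j then c t else 0, 0, fun i => ?_, contDiffOn_const, fun a t _ => ?_⟩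
  · by_cases hij : i = j <;> simp [hij, hc, contDiffOn_const]
  · simp [hj]

theorem add (hf : IsUniformAffineComb I w n f) (hg : IsUniformAffineComb I w n g) :
    IsUniformAffineComb I w n (fun a t => f a t + g a t) := by
  obtain ⟨p, q, hp, hq, hf⟩ := hf
  obtain ⟨p', q', hp', hq', hg⟩ := hg
  refine ⟨p + p', q + q', fun j => (hp j).add (hp' j), hq.add hq', fun a t ht => ?_⟩
  simp only [hf a t ht, hg a t ht, Pi.add_apply, add_mul, Finset.sum_add_distrib]
  ring

theorem sum {ι : Type*} (s : Finset ι) {f : ι → α → ℝ → ℝ}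
    (hf : ∀ i ∈ s, IsUniformAffineComb I w n (f i)) :
    IsUniformAffineComb I w n (fun a t => ∑ i ∈ s, f i a t) := by
  classical
  induction s using Finset.induction_on with
  | empty => simpa using of_contDiffOn (w := w) (n := n) (contDiffOn_const (c := (0 : ℝ)))
  | insert i s hi ih =>
    simp only [Finset.sum_insert hi]
    exact (hf i (Finset.mem_insert_self i s)).add
      (ih fun j hj => hf j (Finset.mem_insert_of_mem hj))

theorem contDiffOn_mul {c : ℝ → ℝ} (hc : ContDiffOn ℝ ∞ c I) (hf : IsUniformAffineComb I w n f) :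
    IsUniformAffineComb I w n (fun a t => c t * f a t) := by
  obtain ⟨p, q, hp, hq, hf⟩ := hf
  refine ⟨fun j => c * p j, c * q, fun j => hc.mul (hp j), hc.mul hq, fun a t ht => ?_⟩
  simp only [hf a t ht, Pi.mul_apply, mul_add, Finset.mul_sum]
  ring_nf

theorem mono {m : ℕ} (hf : IsUniformAffineComb I w n f) (hnm : n ≤ m) :
    IsUniformAffineComb I w m f := by
  obtain ⟨p, q, hp, hq, hf⟩ := hf
  refine ⟨fun j t => if j < n then p j t else 0, q, fun j => ?_, hq, fun a t ht => ?_⟩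
  · by_cases hj : j < n <;> simp [hj, hp j, contDiffOn_const]
  · simp only [hf a t ht, ite_mul, zero_mul, ← Finset.sum_filter]
    congr 2
    ext j
    simp only [Finset.mem_filter, Finset.mem_range]
    omega

theorem deriv {u : ℝ → ℝ} (hI : IsOpen I) (hu : ContDiffOn ℝ ∞ u I)
    (hw : ∀ a j, ∀ t ∈ I, HasDerivAt (w a j) (u t * w a (j + 1) t) t)
    (hf : IsUniformAffineComb I w n f) :
    IsUniformAffineComb I w (n + 1) (fun a => _root_.deriv (f a)) := by
  obtain ⟨p, q, hp, hq, hf⟩ := hf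
  have hderiv : ∀ a, ∀ t ∈ I, _root_.deriv (f a) t = ∑ j ∈ Finset.range n,
      (_root_.deriv (p j) t * w a j t + p j t * u t * w a (j + 1) t) + _root_.deriv q t := by
    intro a t ht
    have hrepr : HasDerivAt (fun t => ∑ j ∈ Finset.range n, p j t * w a j t + q t)
        (∑ j ∈ Finset.range n, (_root_.deriv (p j) t * w a j t + p j t * (u t * w a (j + 1) t))
          + _root_.deriv q t) t :=
      (HasDerivAt.fun_sum fun j _ =>
        ((hp j).differentiableAt_of_isOpen hI ht).hasDerivAt.mul (hw a j t ht)).add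
        (hq.differentiableAt_of_isOpen hI ht).hasDerivAt
    rw [(hrepr.congr_of_eventuallyEq (Filter.eventuallyEq_of_mem (hI.mem_nhds ht) (hf a))).deriv]
    simp only [mul_assoc]
  have hlt : ∀ j ∈ Finset.range n, j < n + 1 ∧ j + 1 < n + 1 := fun j hj => by
    rw [Finset.mem_range] at hj; omega
  refine .congr (.add (.sum _ fun j hj =>
      .add (.term (c := _root_.deriv (p j)) (hlt j hj).1 ((hp j).deriv_of_isOpen hI le_rfl))
        (.term (c := fun t => p j t * u t) (hlt j hj).2 ((hp j).mul hu)))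
      (.of_contDiffOn (hq.deriv_of_isOpen hI le_rfl)))
    fun a t ht => (hderiv a t ht).symm

end IsUniformAffineComb

section Transport

variable {α : Type*} {I : Set ℝ} {w : α → ℕ → ℝ → ℝ} {u c : ℝ → ℝ} {x : α → ℝ → ℝ}

theorem isUniformAffineComb_iteratedDeriv_sub (hI : IsOpen I) (hu : ContDiffOn ℝ ∞ u I)
    (hw : ∀ a j, ∀ t ∈ I, HasDerivAt (w a j) (u t * w a (j + 1) t) t)
    (hx : ∀ a, ContDiffOn ℝ ∞ (x a) I) (hc : ContDiffOn ℝ ∞ c I)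
    (h0 : IsUniformAffineComb I w 0 (fun a t => x a t - c t * w a 0 t)) (k : ℕ) :
    IsUniformAffineComb I w k (fun a t => iteratedDeriv k (x a) t - c t * u t ^ k * w a k t) := by
  induction k with
  | zero => simpa using h0
  | succ k ih =>
    have he : ContDiffOn ℝ ∞ (fun t => c t * u t ^ k) I := hc.mul (hu.pow k)
    have hderiv : ∀ a, ∀ t ∈ I,
        deriv (fun t => iteratedDeriv k (x a) t - c t * u t ^ k * w a k t) t =
          iteratedDeriv (k + 1) (x a) t -
            (deriv (fun t => c t * u t ^ k) t * w a k t + c t * u t ^ k * (u t * w a (k + 1) t)) := by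
      intro a t ht
      have hxk : HasDerivAt (iteratedDeriv k (x a)) (iteratedDeriv (k + 1) (x a) t) t := by
        rw [iteratedDeriv_succ]
        exact (((hx a).iteratedDeriv_of_isOpen hI k).differentiableAt_of_isOpen hI ht).hasDerivAt
      exact (hxk.sub ((he.differentiableAt_of_isOpen hI ht).hasDerivAt.mul (hw a k t ht))).deriv
    refine .congr (.add (ih.deriv hI hu hw) (.term (Nat.lt_succ_self k)
      (he.deriv_of_isOpen hI le_rfl))) fun a t ht => ?_
    rw [hderiv a t ht, pow_succ]
    ring

theorem isUniformAffineComb_odeLHS_sub (hI : IsOpen I) (hu : ContDiffOn ℝ ∞ u I)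
    (hw : ∀ a j, ∀ t ∈ I, HasDerivAt (w a j) (u t * w a (j + 1) t) t)
    (hx : ∀ a, ContDiffOn ℝ ∞ (x a) I) (hc : ContDiffOn ℝ ∞ c I)
    (h0 : IsUniformAffineComb I w 0 (fun a t => x a t - c t * w a 0 t))
    {A : ℕ → ℝ → ℝ} (hA : ∀ i, ContDiffOn ℝ ∞ (A i) I) (r : ℕ) :
    IsUniformAffineComb I w r (fun a t => odeLHS r A (x a) t - c t * u t ^ r * w a r t) := by
  have hiter := isUniformAffineComb_iteratedDeriv_sub hI hu hw hx hc h0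
  refine .congr (.add (hiter r) (.sum (Finset.range r) fun i hi => .contDiffOn_mul (hA i)
    (IsUniformAffineComb.mono (.add ((hiter i).mono i.le_succ)
      (.term i.lt_succ_self (hc.mul (hu.pow i)))) (Finset.mem_range.1 hi)))) fun a t _ => ?_
  simp only [odeLHS, sub_add_cancel]
  ring

theorem exists_linearODE_of_isUniformAffineComb {r : ℕ} {F : α → ℝ → ℝ} {e B : ℝ → ℝ}
    (he : ContDiffOn ℝ ∞ e I) (he0 : ∀ t ∈ I, e t ≠ 0) (hB : ContDiffOn ℝ ∞ B I)
    (hF : IsUniformAffineComb I w r (fun a t => F a t - e t * w a r t)) :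
    ∃ (a' : ℕ → ℝ → ℝ) (b' : ℝ → ℝ), (∀ j, ContDiffOn ℝ ∞ (a' j) I) ∧ ContDiffOn ℝ ∞ b' I ∧
      ∀ a, ∀ t ∈ I, F a t = B t → w a r t + ∑ j ∈ Finset.range r, a' j t * w a j t = b' t := by
  obtain ⟨p, q, hp, hq, hF⟩ := hF
  refine ⟨fun j t => p j t / e t, fun t => (B t - q t) / e t, fun j => (hp j).div he he0,
    (hB.sub hq).div he he0, fun a t ht hFB => ?_⟩
  have hsum : ∑ j ∈ Finset.range r, p j t / e t * w a j t
      = (∑ j ∈ Finset.range r, p j t * w a j t) / e t := by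
    rw [Finset.sum_div]
    exact Finset.sum_congr rfl fun j _ => div_mul_eq_mul_div _ _ _
  rw [hsum, eq_div_iff (he0 t ht), add_mul, div_mul_cancel₀ _ (he0 t ht)]
  have hcomb : B t - e t * w a r t = ∑ j ∈ Finset.range r, p j t * w a j t + q t :=
    hFB ▸ hF a t ht
  linear_combination (-1 : ℝ) * hcomb

end Transport

theorem stmt1_general (r : ℕ) (I : Set ℝ) (hI : IsOpenInterval I)
    (T X₁ X₀ : ℝ → ℝ)
    (hT : ContDiffOn ℝ (⊤ : ℕ∞) T I) (hX₁ : ContDiffOn ℝ (⊤ : ℕ∞) X₁ I) (hX₀ : ContDiffOn ℝ (⊤ : ℕ∞) X₀ I)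
    (hTX : ∀ t ∈ I, deriv T t * X₁ t ≠ 0)
    (a : ℕ → ℝ → ℝ) (b : ℝ → ℝ)
    (ha : ∀ i, ContDiffOn ℝ (⊤ : ℕ∞) (a i) I) (hb : ContDiffOn ℝ (⊤ : ℕ∞) b I) :
    ∃ (a' : ℕ → ℝ → ℝ) (b' : ℝ → ℝ),
      (∀ i, ContDiffOn ℝ (⊤ : ℕ∞) (a' i) (T '' I)) ∧ ContDiffOn ℝ (⊤ : ℕ∞) b' (T '' I) ∧
      ∀ x : ℝ → ℝ, IsSolODE r a b I x →
        ∃ y : ℝ → ℝ, IsSolODE r a' b' (T '' I) y ∧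
          ∀ t ∈ I, y (T t) = X₁ t * x t + X₀ t := by
  obtain ⟨hIo, hIc, -⟩ := hI
  have hT' : ∀ t ∈ I, deriv T t ≠ 0 := fun t ht => left_ne_zero_of_mul (hTX t ht)
  have hX₁' : ∀ t ∈ I, X₁ t ≠ 0 := fun t ht => right_ne_zero_of_mul (hTX t ht)
  obtain ⟨hJ, S, hS, hSI, hST⟩ := exists_contDiffOn_leftInvOn hIo hIc hT hT'
  let y : {x // IsSolODE r a b I x} → ℝ → ℝ := fun x s => X₁ (S s) * x.1 (S s) + X₀ (S s)
  have hy : ∀ x, ContDiffOn ℝ ∞ (y x) (T '' I) := fun x =>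
    ((hX₁.comp hS hSI).mul (x.2.1.comp hS hSI)).add (hX₀.comp hS hSI)
  have hu : ContDiffOn ℝ ∞ (deriv T) I := hT.deriv_of_isOpen hIo le_rfl
  have hc : ContDiffOn ℝ ∞ (fun t => (X₁ t)⁻¹) I := hX₁.inv hX₁'
  have h0 : IsUniformAffineComb I (fun x j t => iteratedDeriv j (y x) (T t)) 0
      (fun x t => x.1 t - (X₁ t)⁻¹ * iteratedDeriv 0 (y x) (T t)) :=
    .congr (.of_contDiffOn (q := fun t => -(X₀ t / X₁ t)) (hX₀.div hX₁ hX₁').neg) fun x t ht => by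
      simp only [iteratedDeriv_zero, y, hST ht]
      field_simp [hX₁' t ht]
      ring
  obtain ⟨a', b', ha', hb', hode⟩ := exists_linearODE_of_isUniformAffineComb (hc.mul (hu.pow r))
    (fun t ht => mul_ne_zero (inv_ne_zero (hX₁' t ht)) (pow_ne_zero r (hT' t ht))) hb
    (isUniformAffineComb_odeLHS_sub hIo hu
      (fun x j t ht => hasDerivAt_iteratedDeriv_comp hJ (hy x) (mem_image_of_mem T ht)
        ((hT.differentiableAt_of_isOpen hIo ht).hasDerivAt) j)
      (fun x => x.2.1) hc h0 ha r)
  refine ⟨fun i => a' i ∘ S, b' ∘ S, fun i => (ha' i).comp hS hSI, hb'.comp hS hSI,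
    fun x hx => ⟨y ⟨x, hx⟩, ⟨hy _, ?_⟩, fun t ht => by simp [y, hST ht]⟩⟩
  rintro _ ⟨t, ht, rfl⟩
  simpa [odeLHS, hST ht] using hode ⟨x, hx⟩ t ht (hx.2 t ht)

/-- every fiber-preserving transformation `t̃ = T(t)`, `x̃ = X₁(t)x + X₀(t)`
with `T' X₁ ≠ 0` maps every `r`-th order linear ODE on `I` to an `r`-th order linear ODE
on `T(I)` with smooth coefficients. -/
theorem stmt1 (r : ℕ) (hr : 2 ≤ r) (I : Set ℝ) (hI : IsOpenInterval I)
    (T X₁ X₀ : ℝ → ℝ)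
    (hT : ContDiffOn ℝ (⊤ : ℕ∞) T I) (hX₁ : ContDiffOn ℝ (⊤ : ℕ∞) X₁ I) (hX₀ : ContDiffOn ℝ (⊤ : ℕ∞) X₀ I)
    (hTX : ∀ t ∈ I, deriv T t * X₁ t ≠ 0)
    (a : ℕ → ℝ → ℝ) (b : ℝ → ℝ)
    (ha : ∀ i, ContDiffOn ℝ (⊤ : ℕ∞) (a i) I) (hb : ContDiffOn ℝ (⊤ : ℕ∞) b I) :
    ∃ (a' : ℕ → ℝ → ℝ) (b' : ℝ → ℝ),
      (∀ i, ContDiffOn ℝ (⊤ : ℕ∞) (a' i) (T '' I)) ∧ ContDiffOn ℝ (⊤ : ℕ∞) b' (T '' I) ∧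
      ∀ x : ℝ → ℝ, IsSolODE r a b I x →
        ∃ y : ℝ → ℝ, IsSolODE r a' b' (T '' I) y ∧
          ∀ t ∈ I, y (T t) = X₁ t * x t + X₀ t :=
  stmt1_general r I hI T X₁ X₀ hT hX₁ hX₀ hTX a b ha hb
end

section
/- Let a₁, a₀, b be smooth functions on an open interval I ⊆ ℝ, let φ₀ : I → ℝ be a solution of the second-order linear ODE x'' + a₁x' + a₀x = b, and let φ₁, φ₂ : I → ℝ be solutions of the associated homogeneous equation x'' + a₁x' + a₀x = 0 such that φ₁(t) ≠ 0 and the Wronskian φ₁(t)φ₂'(t) − φ₂(t)φ₁'(t) ≠ 0 for all t ∈ I. Set T = φ₂/φ₁, so T' ≠ 0 on I and T is a diffeomorphism of I onto T(I). Then for every solution x of x'' + a₁x' + a₀x = b, the function y : T(I) → ℝ defined by y(T(t)) = (x(t) − φ₀(t))/φ₁(t) is smooth and satisfies y'' = 0 on T(I). (The Arnold transformation t̃ = φ₂/φ₁, x̃ = (x − φ₀)/φ₁ reduces every second-order linear ODE to the free particle equation x'' = 0.) -/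
/-!
Subtracting `φ₀` turns `x` into a solution `u` of the homogeneous equation. By Abel's identity
`W' = -a₁ W`, the ratio `W(φ₁, u) / W(φ₁, φ₂)` of Wronskians is a constant `c₂`, and since
`(g / φ₁)' = W(φ₁, g) / φ₁²` this says `(u / φ₁)' = c₂ T'`. Hence `u / φ₁ = c₁ + c₂ T` on the
interval, i.e. `y(s) = c₁ + c₂ s`.
-/

open Set

def SolvesODE2 (a₀ a₁ b : ℝ → ℝ) (I : Set ℝ) (x : ℝ → ℝ) : Prop :=
  ContDiffOn ℝ (⊤ : ℕ∞) x I ∧ ∀ t ∈ I, iteratedDeriv 2 x t + a₁ t * deriv x t + a₀ t * x t = b t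

noncomputable def wronskian (f g : ℝ → ℝ) (t : ℝ) : ℝ := f t * deriv g t - g t * deriv f t

lemma iteratedDeriv_two_eq_deriv_deriv (f : ℝ → ℝ) : iteratedDeriv 2 f = deriv (deriv f) := by
  rw [iteratedDeriv_succ, iteratedDeriv_one]

lemma deriv_div_eq_wronskian_div {f g : ℝ → ℝ} {t : ℝ} (hf : DifferentiableAt ℝ f t)
    (hg : DifferentiableAt ℝ g t) (hft : f t ≠ 0) :
    deriv (fun s => g s / f s) t = wronskian f g t / f t ^ 2 := by
  rw [deriv_fun_div hg hf hft, wronskian]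
  ring

lemma hasDerivAt_wronskian {f g : ℝ → ℝ} {t : ℝ} (hf : DifferentiableAt ℝ f t)
    (hg : DifferentiableAt ℝ g t) (hf' : DifferentiableAt ℝ (deriv f) t)
    (hg' : DifferentiableAt ℝ (deriv g) t) :
    HasDerivAt (wronskian f g) (f t * iteratedDeriv 2 g t - g t * iteratedDeriv 2 f t) t := by
  rw [iteratedDeriv_two_eq_deriv_deriv, iteratedDeriv_two_eq_deriv_deriv]
  exact ((hf.hasDerivAt.mul hg'.hasDerivAt).sub (hg.hasDerivAt.mul hf'.hasDerivAt)).congr_deriv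
    (by ring)

section OpenSet

variable {I : Set ℝ} {a₀ a₁ : ℝ → ℝ}

lemma ContDiffOn.differentiableAt_of_isOpen_s2 {f : ℝ → ℝ} (hf : ContDiffOn ℝ (⊤ : ℕ∞) f I)
    (hI : IsOpen I) {t : ℝ} (ht : t ∈ I) : DifferentiableAt ℝ f t :=
  (hf.contDiffAt (hI.mem_nhds ht)).differentiableAt (by simp)

lemma ContDiffOn.differentiableAt_deriv_of_isOpen {f : ℝ → ℝ} (hf : ContDiffOn ℝ (⊤ : ℕ∞) f I)
    (hI : IsOpen I) {t : ℝ} (ht : t ∈ I) : DifferentiableAt ℝ (deriv f) t :=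
  (hf.deriv_of_isOpen hI le_rfl).differentiableAt_of_isOpen_s2 hI ht

lemma SolvesODE2.sub {b : ℝ → ℝ} {x y : ℝ → ℝ} (hI : IsOpen I) (hx : SolvesODE2 a₀ a₁ b I x)
    (hy : SolvesODE2 a₀ a₁ b I y) : SolvesODE2 a₀ a₁ 0 I (x - y) := by
  refine ⟨hx.1.sub hy.1, fun t ht => ?_⟩
  have two_le : ((2 : ℕ) : WithTop ℕ∞) ≤ (⊤ : ℕ∞) := WithTop.coe_le_coe.2 le_top
  rw [iteratedDeriv_sub ((hx.1.contDiffAt (hI.mem_nhds ht)).of_le two_le)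
      ((hy.1.contDiffAt (hI.mem_nhds ht)).of_le two_le),
    deriv_sub (hx.1.differentiableAt_of_isOpen_s2 hI ht) (hy.1.differentiableAt_of_isOpen_s2 hI ht)]
  simp only [Pi.sub_apply, Pi.zero_apply]
  linear_combination hx.2 t ht - hy.2 t ht

lemma SolvesODE2.hasDerivAt_wronskian {f g : ℝ → ℝ} (hI : IsOpen I)
    (hf : SolvesODE2 a₀ a₁ 0 I f) (hg : SolvesODE2 a₀ a₁ 0 I g) {t : ℝ} (ht : t ∈ I) :
    HasDerivAt (wronskian f g) (-a₁ t * wronskian f g t) t := by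
  refine (_root_.hasDerivAt_wronskian (hf.1.differentiableAt_of_isOpen_s2 hI ht)
    (hg.1.differentiableAt_of_isOpen_s2 hI ht) (hf.1.differentiableAt_deriv_of_isOpen hI ht)
    (hg.1.differentiableAt_deriv_of_isOpen hI ht)).congr_deriv ?_
  rw [wronskian]
  linear_combination (norm := (simp only [Pi.zero_apply]; ring)) f t * hg.2 t ht - g t * hf.2 t ht

lemma SolvesODE2.exists_wronskian_eq_const_mul {f g h : ℝ → ℝ} (hI : IsOpen I)
    (hI' : IsPreconnected I) (hf : SolvesODE2 a₀ a₁ 0 I f) (hg : SolvesODE2 a₀ a₁ 0 I g)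
    (hh : SolvesODE2 a₀ a₁ 0 I h) (hW : ∀ t ∈ I, wronskian f g t ≠ 0) :
    ∃ c : ℝ, ∀ t ∈ I, wronskian f h t = c * wronskian f g t := by
  have hratio : ∀ t ∈ I, HasDerivAt (wronskian f h / wronskian f g) 0 t := fun t ht =>
    ((hf.hasDerivAt_wronskian hI hh ht).div (hf.hasDerivAt_wronskian hI hg ht)
      (hW t ht)).congr_deriv (by ring)
  obtain ⟨c, hc⟩ := hI.exists_is_const_of_deriv_eq_zero hI'
    (fun t ht => (hratio t ht).differentiableAt.differentiableWithinAt)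
    (fun t ht => (hratio t ht).deriv)
  exact ⟨c, fun t ht => (div_eq_iff (hW t ht)).1 (hc t ht)⟩

lemma SolvesODE2.exists_eq_linearCombination {φ₁ φ₂ u : ℝ → ℝ} (hI : IsOpen I)
    (hI' : IsPreconnected I) (hφ₁ : SolvesODE2 a₀ a₁ 0 I φ₁) (hφ₂ : SolvesODE2 a₀ a₁ 0 I φ₂)
    (hu : SolvesODE2 a₀ a₁ 0 I u) (hφ₁ne : ∀ t ∈ I, φ₁ t ≠ 0)
    (hW : ∀ t ∈ I, wronskian φ₁ φ₂ t ≠ 0) :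
    ∃ c₁ c₂ : ℝ, ∀ t ∈ I, u t = c₁ * φ₁ t + c₂ * φ₂ t := by
  obtain ⟨c₂, hc₂⟩ := hφ₁.exists_wronskian_eq_const_mul hI hI' hφ₂ hu hW
  have d₁ := fun t (ht : t ∈ I) => hφ₁.1.differentiableAt_of_isOpen_s2 hI ht
  have d₂ := fun t (ht : t ∈ I) => hφ₂.1.differentiableAt_of_isOpen_s2 hI ht
  have dᵤ := fun t (ht : t ∈ I) => hu.1.differentiableAt_of_isOpen_s2 hI ht
  have hquot : EqOn (deriv fun s => u s / φ₁ s) (deriv fun s => c₂ * (φ₂ s / φ₁ s)) I := by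
    intro t ht
    rw [deriv_const_mul (d := fun s => φ₂ s / φ₁ s) _ ((d₂ t ht).div (d₁ t ht) (hφ₁ne t ht)),
      deriv_div_eq_wronskian_div (d₁ t ht) (dᵤ t ht) (hφ₁ne t ht),
      deriv_div_eq_wronskian_div (d₁ t ht) (d₂ t ht) (hφ₁ne t ht), hc₂ t ht, mul_div_assoc]
  obtain ⟨c₁, hc₁⟩ := hI.exists_eq_add_of_deriv_eq hI'
    (fun t ht => ((dᵤ t ht).div (d₁ t ht) (hφ₁ne t ht)).differentiableWithinAt)
    (fun t ht => (((d₂ t ht).div (d₁ t ht) (hφ₁ne t ht)).const_mul c₂).differentiableWithinAt)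
    hquot
  refine ⟨c₁, c₂, fun t ht => ?_⟩
  have := hc₁ ht
  simp only [Pi.div_apply] at this
  field_simp [hφ₁ne t ht] at this
  linarith

end OpenSet

theorem stmt2_general (I : Set ℝ) (hI : IsOpenInterval I) (a₀ a₁ b : ℝ → ℝ)
    (φ₀ φ₁ φ₂ : ℝ → ℝ)
    (hφ₀ : ContDiffOn ℝ (⊤ : ℕ∞) φ₀ I ∧
      ∀ t ∈ I, iteratedDeriv 2 φ₀ t + a₁ t * deriv φ₀ t + a₀ t * φ₀ t = b t)
    (hφ₁ : ContDiffOn ℝ (⊤ : ℕ∞) φ₁ I ∧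
      ∀ t ∈ I, iteratedDeriv 2 φ₁ t + a₁ t * deriv φ₁ t + a₀ t * φ₁ t = 0)
    (hφ₂ : ContDiffOn ℝ (⊤ : ℕ∞) φ₂ I ∧
      ∀ t ∈ I, iteratedDeriv 2 φ₂ t + a₁ t * deriv φ₂ t + a₀ t * φ₂ t = 0)
    (hφ₁ne : ∀ t ∈ I, φ₁ t ≠ 0)
    (hW : ∀ t ∈ I, φ₁ t * deriv φ₂ t - φ₂ t * deriv φ₁ t ≠ 0) :
    (∀ t ∈ I, deriv (fun s => φ₂ s / φ₁ s) t ≠ 0) ∧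
    ∀ x : ℝ → ℝ,
      (ContDiffOn ℝ (⊤ : ℕ∞) x I ∧
        ∀ t ∈ I, iteratedDeriv 2 x t + a₁ t * deriv x t + a₀ t * x t = b t) →
      ∃ y : ℝ → ℝ, ContDiffOn ℝ (⊤ : ℕ∞) y ((fun s => φ₂ s / φ₁ s) '' I) ∧
        (∀ s ∈ (fun s => φ₂ s / φ₁ s) '' I, iteratedDeriv 2 y s = 0) ∧
        ∀ t ∈ I, y (φ₂ t / φ₁ t) = (x t - φ₀ t) / φ₁ t := by
  obtain ⟨hIo, hIc, -⟩ := hI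
  refine ⟨fun t ht => ?_, fun x hx => ?_⟩
  · rw [deriv_div_eq_wronskian_div (hφ₁.1.differentiableAt_of_isOpen_s2 hIo ht)
      (hφ₂.1.differentiableAt_of_isOpen_s2 hIo ht) (hφ₁ne t ht)]
    exact div_ne_zero (hW t ht) (pow_ne_zero 2 (hφ₁ne t ht))
  obtain ⟨c₁, c₂, hc⟩ := SolvesODE2.exists_eq_linearCombination hIo hIc.isPreconnected hφ₁ hφ₂
    (SolvesODE2.sub hIo hx hφ₀) hφ₁ne hW
  refine ⟨fun s => c₁ + c₂ * s, by fun_prop, fun s _ => ?_, fun t ht => ?_⟩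
  · simp [iteratedDeriv_two_eq_deriv_deriv]
  · rw [← Pi.sub_apply, hc t ht]
    field_simp [hφ₁ne t ht]

/-- the Arnold transformation `t̃ = φ₂/φ₁`, `x̃ = (x − φ₀)/φ₁` reduces every
second-order linear ODE `x'' + a₁x' + a₀x = b` to the free particle equation `y'' = 0`. -/
theorem stmt2 (I : Set ℝ) (hI : IsOpenInterval I) (a₀ a₁ b : ℝ → ℝ)
    (ha₀ : ContDiffOn ℝ (⊤ : ℕ∞) a₀ I) (ha₁ : ContDiffOn ℝ (⊤ : ℕ∞) a₁ I) (hb : ContDiffOn ℝ (⊤ : ℕ∞) b I)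
    (φ₀ φ₁ φ₂ : ℝ → ℝ)
    (hφ₀ : ContDiffOn ℝ (⊤ : ℕ∞) φ₀ I ∧
      ∀ t ∈ I, iteratedDeriv 2 φ₀ t + a₁ t * deriv φ₀ t + a₀ t * φ₀ t = b t)
    (hφ₁ : ContDiffOn ℝ (⊤ : ℕ∞) φ₁ I ∧
      ∀ t ∈ I, iteratedDeriv 2 φ₁ t + a₁ t * deriv φ₁ t + a₀ t * φ₁ t = 0)
    (hφ₂ : ContDiffOn ℝ (⊤ : ℕ∞) φ₂ I ∧
      ∀ t ∈ I, iteratedDeriv 2 φ₂ t + a₁ t * deriv φ₂ t + a₀ t * φ₂ t = 0)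
    (hφ₁ne : ∀ t ∈ I, φ₁ t ≠ 0)
    (hW : ∀ t ∈ I, φ₁ t * deriv φ₂ t - φ₂ t * deriv φ₁ t ≠ 0) :
    (∀ t ∈ I, deriv (fun s => φ₂ s / φ₁ s) t ≠ 0) ∧
    ∀ x : ℝ → ℝ,
      (ContDiffOn ℝ (⊤ : ℕ∞) x I ∧
        ∀ t ∈ I, iteratedDeriv 2 x t + a₁ t * deriv x t + a₀ t * x t = b t) →
      ∃ y : ℝ → ℝ, ContDiffOn ℝ (⊤ : ℕ∞) y ((fun s => φ₂ s / φ₁ s) '' I) ∧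
        (∀ s ∈ (fun s => φ₂ s / φ₁ s) '' I, iteratedDeriv 2 y s = 0) ∧
        ∀ t ∈ I, y (φ₂ t / φ₁ t) = (x t - φ₀ t) / φ₁ t :=
  stmt2_general I hI a₀ a₁ b φ₀ φ₁ φ₂ hφ₀ hφ₁ hφ₂ hφ₁ne hW
end

section
/- Let I ⊆ ℝ be an open interval and T : I → ℝ a smooth function with T'(t) ≠ 0 for all t ∈ I. If T satisfies T'''(t)·T'(t) − (3/2)·(T''(t))² = 0 on I (i.e., the Schwarzian derivative of T vanishes), then there exist constants α, β, γ, δ with αδ − βγ ≠ 0 and γt + δ ≠ 0 for all t ∈ I such that T(t) = (αt + β)/(γt + δ) on I. -/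
open Filter Topology

theorem ContDiffOn.hasDerivAt_iteratedDeriv {𝕜 F : Type*} [NontriviallyNormedField 𝕜]
    [NormedAddCommGroup F] [NormedSpace 𝕜 F] {f : 𝕜 → F} {s : Set 𝕜} {n : WithTop ℕ∞} {m : ℕ}
    (hf : ContDiffOn 𝕜 n f s) (hs : IsOpen s) (hmn : m < n) {x : 𝕜} (hx : x ∈ s) :
    HasDerivAt (iteratedDeriv m f) (iteratedDeriv (m + 1) f x) x := by
  have hwithin : DifferentiableAt 𝕜 (iteratedDerivWithin m f s) x :=
    (hf.differentiableOn_iteratedDerivWithin hmn hs.uniqueDiffOn x hx).differentiableAt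
      (hs.mem_nhds hx)
  have heq : iteratedDerivWithin m f s =ᶠ[𝓝 x] iteratedDeriv m f :=
    eventuallyEq_of_mem (hs.mem_nhds hx) (iteratedDerivWithin_of_isOpen hs)
  rw [iteratedDeriv_succ]
  exact (heq.differentiableAt_iff.mp hwithin).hasDerivAt

theorem IsPreconnected.mul_pos_of_ne_zero {α : Type*} [TopologicalSpace α] {s : Set α}
    (hs : IsPreconnected s) {u : α → ℝ} (hu : ContinuousOn u s) (hne : ∀ x ∈ s, u x ≠ 0)
    {x y : α} (hx : x ∈ s) (hy : y ∈ s) : 0 < u x * u y := by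
  by_contra! h
  rcases mul_nonpos_iff.mp h with ⟨hux, huy⟩ | ⟨hux, huy⟩
  · obtain ⟨z, hz, hz0⟩ := hs.intermediate_value hy hx hu ⟨huy, hux⟩
    exact hne z hz hz0
  · obtain ⟨z, hz, hz0⟩ := hs.intermediate_value hx hy hu ⟨hux, huy⟩
    exact hne z hz hz0

theorem IsOpen.exists_eq_affine_of_hasDerivAt_zero {s : Set ℝ} (hs : IsOpen s)
    (hs' : IsPreconnected s) {f f' : ℝ → ℝ}
    (hf : ∀ x ∈ s, HasDerivAt f (f' x) x) (hf' : ∀ x ∈ s, HasDerivAt f' 0 x) :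
    ∃ a b : ℝ, ∀ x ∈ s, f x = a * x + b := by
  obtain ⟨a, ha⟩ := hs.exists_is_const_of_deriv_eq_zero hs'
    (fun x hx => (hf' x hx).differentiableAt.differentiableWithinAt)
    (fun x hx => (hf' x hx).deriv)
  obtain ⟨b, hb⟩ := hs.exists_eq_add_of_deriv_eq hs' (g := fun x => a * x)
    (fun x hx => (hf x hx).differentiableAt.differentiableWithinAt)
    (differentiableOn_id.const_mul a) (fun x hx => by simp [(hf x hx).deriv, ha x hx])
  exact ⟨a, b, hb⟩

theorem IsOpen.exists_eq_inv_sq_affine_of_schwarzian_eq_zero {s : Set ℝ} (hs : IsOpen s)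
    (hs' : IsPreconnected s) {u v w : ℝ → ℝ} (hu : ∀ x ∈ s, HasDerivAt u (v x) x)
    (hv : ∀ x ∈ s, HasDerivAt v (w x) x) (hpos : ∀ x ∈ s, 0 < u x)
    (hS : ∀ x ∈ s, w x * u x - 3 / 2 * v x ^ 2 = 0) :
    ∃ a b : ℝ, ∀ x ∈ s, 0 < a * x + b ∧ u x = ((a * x + b) ^ 2)⁻¹ := by
  have hf : ∀ x ∈ s, HasDerivAt (fun y => u y ^ (-1 / 2 : ℝ))
      (-1 / 2 * v x * u x ^ (-3 / 2 : ℝ)) x := fun x hx => by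
    convert (hu x hx).rpow_const (p := -1 / 2) (Or.inl (hpos x hx).ne') using 1
    norm_num [mul_comm]
  have hf' : ∀ x ∈ s, HasDerivAt (fun y => -1 / 2 * v y * u y ^ (-3 / 2 : ℝ)) 0 x := fun x hx => by
    have hd := ((hv x hx).const_mul (-1 / 2)).mul
      ((hu x hx).rpow_const (p := -3 / 2) (Or.inl (hpos x hx).ne'))
    refine hd.congr_deriv ?_
    have hsplit : u x ^ (-3 / 2 : ℝ) = u x ^ (-3 / 2 - 1 : ℝ) * u x := by
      rw [← Real.rpow_add_one (hpos x hx).ne']; norm_num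
    rw [hsplit]
    linear_combination (-1 / 2 * u x ^ (-3 / 2 - 1 : ℝ)) * hS x hx
  obtain ⟨a, b, hab⟩ := hs.exists_eq_affine_of_hasDerivAt_zero hs' hf hf'
  refine ⟨a, b, fun x hx => ⟨hab x hx ▸ Real.rpow_pos_of_pos (hpos x hx) _, ?_⟩⟩
  rw [← hab x hx, ← Real.rpow_natCast, ← Real.rpow_mul (hpos x hx).le]
  norm_num [Real.rpow_neg_one]

theorem IsOpen.exists_eq_fractionalLinear_of_hasDerivAt {s : Set ℝ} (hs : IsOpen s)
    (hs' : IsPreconnected s) (hs₀ : s.Nonempty) {T : ℝ → ℝ} {a b c : ℝ} (hc : c ≠ 0)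
    (hne : ∀ x ∈ s, a * x + b ≠ 0) (hT : ∀ x ∈ s, HasDerivAt T (c / (a * x + b) ^ 2) x) :
    ∃ α β γ δ : ℝ, α * δ - β * γ ≠ 0 ∧
      ∀ x ∈ s, γ * x + δ ≠ 0 ∧ T x = (α * x + β) / (γ * x + δ) := by
  obtain ⟨x₀, hx₀⟩ := hs₀
  have hp : a * x₀ + b ≠ 0 := hne x₀ hx₀
  have hΦ : ∀ x ∈ s, HasDerivAt (fun y => c * (y - x₀) / ((a * x₀ + b) * (a * y + b)))
      (c / (a * x + b) ^ 2) x := fun x hx => by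
    have hd := (((hasDerivAt_id' x).sub_const x₀).const_mul c).div
      ((((hasDerivAt_id' x).const_mul a).add_const b).const_mul (a * x₀ + b))
      (mul_ne_zero hp (hne x hx))
    refine hd.congr_deriv ?_
    have := hne x hx
    field_simp
    ring
  obtain ⟨k, hk⟩ := hs.exists_eq_add_of_deriv_eq hs'
    (fun x hx => (hT x hx).differentiableAt.differentiableWithinAt)
    (fun x hx => (hΦ x hx).differentiableAt.differentiableWithinAt)
    (fun x hx => by rw [(hT x hx).deriv, (hΦ x hx).deriv])
  set p := a * x₀ + b
  refine ⟨k * p * a + c, k * p * b - c * x₀, p * a, p * b, ?_, fun x hx => ⟨?_, ?_⟩⟩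
  · have hdet : (k * p * a + c) * (p * b) - (k * p * b - c * x₀) * (p * a) = c * p ^ 2 := by ring
    rw [hdet]
    exact mul_ne_zero hc (pow_ne_zero 2 hp)
  · rw [show p * a * x + p * b = p * (a * x + b) by ring]
    exact mul_ne_zero hp (hne x hx)
  · rw [hk hx, show p * a * x + p * b = p * (a * x + b) by ring]
    dsimp only
    rw [div_add' _ _ _ (mul_ne_zero hp (hne x hx))]
    ring

/-- a smooth function on an open interval with nonvanishing derivative and
vanishing Schwarzian derivative is fractional linear. -/
theorem stmt9 (I : Set ℝ) (hI : IsOpenInterval I) (T : ℝ → ℝ)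
    (hT : ContDiffOn ℝ (⊤ : ℕ∞) T I) (hT' : ∀ t ∈ I, deriv T t ≠ 0)
    (hSchwarz : ∀ t ∈ I,
      iteratedDeriv 3 T t * deriv T t - (3 / 2) * iteratedDeriv 2 T t ^ 2 = 0) :
    ∃ α β γ δ : ℝ, α * δ - β * γ ≠ 0 ∧
      ∀ t ∈ I, γ * t + δ ≠ 0 ∧ T t = (α * t + β) / (γ * t + δ) := by
  obtain ⟨hIo, hIc, t₀, ht₀⟩ := hI
  have hIp : IsPreconnected I := hIc.isPreconnected
  have hD : ∀ m : ℕ, ∀ t ∈ I, HasDerivAt (iteratedDeriv m T) (iteratedDeriv (m + 1) T t) t :=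
    fun m t ht => hT.hasDerivAt_iteratedDeriv hIo (by exact_mod_cast WithTop.coe_lt_top _) ht
  simp only [← iteratedDeriv_one] at hT' hSchwarz
  set ε := iteratedDeriv 1 T t₀
  have hpos : ∀ t ∈ I, 0 < ε * iteratedDeriv 1 T t := fun t ht =>
    hIp.mul_pos_of_ne_zero (fun t ht => (hD 1 t ht).continuousAt.continuousWithinAt) hT' ht₀ ht
  obtain ⟨a, b, hab⟩ := hIo.exists_eq_inv_sq_affine_of_schwarzian_eq_zero hIp
    (fun t ht => (hD 1 t ht).const_mul ε) (fun t ht => (hD 2 t ht).const_mul ε) hpos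
    (fun t ht => by linear_combination ε ^ 2 * hSchwarz t ht)
  refine hIo.exists_eq_fractionalLinear_of_hasDerivAt hIp ⟨t₀, ht₀⟩ (inv_ne_zero (hT' t₀ ht₀))
    (fun t ht => (hab t ht).1.ne') (fun t ht => ?_)
  have hderiv := hD 0 t ht
  rw [iteratedDeriv_zero, (eq_inv_mul_iff_mul_eq₀ (hT' t₀ ht₀)).mpr (hab t ht).2] at hderiv
  rwa [div_eq_mul_inv]
end

section
/- Let r ≥ 3, and let E and Ẽ be homogeneous r-th order linear ODEs of first Arnold form (coefficient of the zeroth-order term identically zero, i.e., of the form x^{(r)} + a_{r−1}x^{(r−1)} + ⋯ + a₁x' = 0) on open intervals I and T(I) respectively. Let T, X₁, X₀ : I → ℝ be smooth with T'(t)X₁(t) ≠ 0 for all t, and suppose the fiber-preserving transformation t̃ = T(t), x̃ = X₁(t)x + X₀(t) maps E to Ẽ and its inverse maps Ẽ to E (for every solution y of Ẽ, the function t ↦ (y(T(t)) − X₀(t))/X₁(t) is a solution of E). Then both 1/X₁ and X₀/X₁ are solutions of E. -/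
open Set

/-- The fiber-preserving transformation `t̃ = T(t)`, `x̃ = X₁(t)x + X₀(t)` maps the
`r`-th order linear ODE with coefficients `a`, `b` on `I` to the one with coefficients
`a'`, `b'` on `T(I)`: for every solution `x` of the source equation the function
`y(s) = X₁(T⁻¹(s))x(T⁻¹(s)) + X₀(T⁻¹(s))` is a solution of the target equation. -/
def FPMapsODE (r : ℕ) (I : Set ℝ) (a : ℕ → ℝ → ℝ) (b : ℝ → ℝ)
    (a' : ℕ → ℝ → ℝ) (b' : ℝ → ℝ) (T X₁ X₀ : ℝ → ℝ) : Prop :=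
  ∀ x : ℝ → ℝ, IsSolODE r a b I x →
    ∃ y : ℝ → ℝ, IsSolODE r a' b' (T '' I) y ∧ ∀ t ∈ I, y (T t) = X₁ t * x t + X₀ t

/-
The constants solve every homogeneous equation of first Arnold form (of order `r ≥ 1`), in
particular `Ẽ`. Pulling the constants `0` and `1` back along the inverse transformation gives
the solutions `u₀ = -X₀/X₁` and `u₁ = (1 - X₀)/X₁` of `E`, and by linearity of `E`,
`1/X₁ = u₁ - u₀` and `X₀/X₁ = 1/X₁ - u₁` are solutions as well.
-/

lemma odeLHS_const {r : ℕ} (hr : 0 < r) (a : ℕ → ℝ → ℝ) (c t : ℝ) :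
    odeLHS r a (fun _ => c) t = a 0 t * c := by
  simp [odeLHS, iteratedDeriv_const, hr.ne', Finset.mem_range.mpr hr]

lemma isSolODE_const {r : ℕ} (hr : 0 < r) {a : ℕ → ℝ → ℝ} {I : Set ℝ}
    (ha₀ : ∀ t ∈ I, a 0 t = 0) (c : ℝ) :
    IsSolODE r a (fun _ => 0) I (fun _ => c) :=
  ⟨contDiffOn_const, fun t ht => by rw [odeLHS_const hr, ha₀ t ht, zero_mul]⟩

lemma IsSolODE.sub {r : ℕ} {a : ℕ → ℝ → ℝ} {I : Set ℝ} (hI : IsOpen I) {f g : ℝ → ℝ}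
    (hf : IsSolODE r a (fun _ => 0) I f) (hg : IsSolODE r a (fun _ => 0) I g) :
    IsSolODE r a (fun _ => 0) I (fun t => f t - g t) := by
  refine ⟨hf.1.sub hg.1, fun t ht => ?_⟩
  have hderiv (n : ℕ) :
      iteratedDeriv n (fun t => f t - g t) t = iteratedDeriv n f t - iteratedDeriv n g t :=
    iteratedDeriv_fun_sub ((hf.1.contDiffAt (hI.mem_nhds ht)).of_le (by exact_mod_cast le_top))
      ((hg.1.contDiffAt (hI.mem_nhds ht)).of_le (by exact_mod_cast le_top))
  have hfg : odeLHS r a f t - odeLHS r a g t = 0 := by rw [hf.2 t ht, hg.2 t ht, sub_zero]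
  simpa only [odeLHS, hderiv, mul_sub, Finset.sum_sub_distrib, add_sub_add_comm] using hfg

theorem stmt10_general (r : ℕ) (hr : 3 ≤ r) (I : Set ℝ) (hI : IsOpenInterval I)
    (a a' : ℕ → ℝ → ℝ)
    (T X₁ X₀ : ℝ → ℝ)
    (hA' : ∀ s ∈ T '' I, a' 0 s = 0)
    (hinv : ∀ y : ℝ → ℝ, IsSolODE r a' (fun _ => 0) (T '' I) y →
      IsSolODE r a (fun _ => 0) I (fun t => (y (T t) - X₀ t) / X₁ t)) :
    IsSolODE r a (fun _ => 0) I (fun t => 1 / X₁ t) ∧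
    IsSolODE r a (fun _ => 0) I (fun t => X₀ t / X₁ t) := by
  have hu (c : ℝ) : IsSolODE r a (fun _ => 0) I (fun t => (c - X₀ t) / X₁ t) :=
    hinv _ (isSolODE_const (by omega) hA' c)
  have hinv₁ : IsSolODE r a (fun _ => 0) I (fun t => 1 / X₁ t) := by
    convert (hu 1).sub hI.1 (hu 0) using 2 with t
    ring
  refine ⟨hinv₁, ?_⟩
  convert hinv₁.sub hI.1 (hu 1) using 2 with t
  ring

/-- if a fiber-preserving transformation `t̃ = T(t)`, `x̃ = X₁(t)x + X₀(t)`
with `T' X₁ ≠ 0` maps a homogeneous `r`-th order (`r ≥ 3`) linear ODE `E` of first Arnold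
form (`a₀ ≡ 0`) to another such equation, with inverse mapping back, then both `1/X₁`
and `X₀/X₁` are solutions of `E`. -/
theorem stmt10 (r : ℕ) (hr : 3 ≤ r) (I : Set ℝ) (hI : IsOpenInterval I)
    (a a' : ℕ → ℝ → ℝ)
    (T X₁ X₀ : ℝ → ℝ)
    (hT : ContDiffOn ℝ (⊤ : ℕ∞) T I) (hX₁ : ContDiffOn ℝ (⊤ : ℕ∞) X₁ I) (hX₀ : ContDiffOn ℝ (⊤ : ℕ∞) X₀ I)
    (hTX : ∀ t ∈ I, deriv T t * X₁ t ≠ 0)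
    (ha : ∀ i, ContDiffOn ℝ (⊤ : ℕ∞) (a i) I) (ha' : ∀ i, ContDiffOn ℝ (⊤ : ℕ∞) (a' i) (T '' I))
    (hA : ∀ t ∈ I, a 0 t = 0) (hA' : ∀ s ∈ T '' I, a' 0 s = 0)
    (hmaps : FPMapsODE r I a (fun _ => 0) a' (fun _ => 0) T X₁ X₀)
    (hinv : ∀ y : ℝ → ℝ, IsSolODE r a' (fun _ => 0) (T '' I) y →
      IsSolODE r a (fun _ => 0) I (fun t => (y (T t) - X₀ t) / X₁ t)) :
    IsSolODE r a (fun _ => 0) I (fun t => 1 / X₁ t) ∧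
    IsSolODE r a (fun _ => 0) I (fun t => X₀ t / X₁ t) :=
  stmt10_general r hr I hI a a' T X₁ X₀ hA' hinv
end
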